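/- arXiv:1803.10176 — 4 statements merged into one kernel-verified Lean document; each statement's English description precedes it below -/
import Mathlib

section
/- Let μ be a Borel measure on U := ℝ_+^d \ {0}, let s > 0, and let λ ∈ (s/2, s). If ∫_U ‖z‖^{s/λ} 1_{{‖z‖≥1}} μ(dz) < ∞ and ∫_U ‖z‖² 1_{{‖z‖<1}} μ(dz) < ∞, then ∫₀^∞ ∫_U e^{−(2λ−s)u} ‖z‖² 1_{{‖z‖ < e^{λu}}} μ(dz) du = (1/(2λ−s)) [ ∫_U ‖z‖² 1_{{‖z‖<1}} μ(dz) + ∫_U ‖z‖^{s/λ} 1_{{‖z‖≥1}} μ(dz) ] < ∞. -/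
/-!
By Tonelli the `u`-integral can be done first. For `r = ‖z‖ > 0` the constraint `r < e^{λu}`
means `u > log r / λ`, so the inner integral is `e^{-(2λ-s) max(0, log r / λ)} r² / (2λ-s)`, that is
`r² / (2λ-s)` for `r < 1` and `r^{s/λ} / (2λ-s)` for `r ≥ 1`. Tonelli needs `μ` to be s-finite:
it is absolutely continuous with respect to the finite measure with density
`r² 1_{r<1} + r^{s/λ} 1_{r≥1}`, which is positive on `U`.
-/

open MeasureTheory Set Real
open scoped ENNReal

lemma lintegral_exp_neg_mul_Ioi (a : ℝ) {b : ℝ} (hb : 0 < b) :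
    ∫⁻ u in Ioi a, ENNReal.ofReal (exp (-b * u)) = ENNReal.ofReal (exp (-b * a) / b) := by
  rw [← ofReal_integral_eq_lintegral_ofReal (exp_neg_integrableOn_Ioi a hb)
    (.of_forall fun _ ↦ (exp_pos _).le), integral_exp_mul_Ioi (neg_lt_zero.2 hb), neg_div_neg_eq]

lemma lintegral_Ioi_ite_lt_exp {lam c r : ℝ} (hlam : 0 < lam) (hc : 0 < c) (hr : 0 ≤ r) :
    ∫⁻ u in Ioi 0, ENNReal.ofReal (if r < exp (lam * u) then exp (-c * u) * r ^ 2 else 0)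
      = ENNReal.ofReal (1 / c) * (ENNReal.ofReal (if r < 1 then r ^ 2 else 0)
          + ENNReal.ofReal (if 1 ≤ r then r ^ (2 - c / lam) else 0)) := by
  rcases hr.eq_or_lt with rfl | hr0
  · norm_num
  have hcut : ∀ u, r < exp (lam * u) ↔ log r / lam < u := fun u ↦ by
    rw [← log_lt_iff_lt_exp hr0, div_lt_iff₀ hlam, mul_comm]
  have hrestrict : ∫⁻ u in Ioi 0, ENNReal.ofReal
        (if r < exp (lam * u) then exp (-c * u) * r ^ 2 else 0)
      = ∫⁻ u in Ioi (log r / lam ⊔ 0), ENNReal.ofReal (exp (-c * u)) * ENNReal.ofReal (r ^ 2) := by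
    rw [← Ioi_inter_Ioi, ← Measure.restrict_restrict measurableSet_Ioi]
    conv_rhs => rw [← lintegral_indicator measurableSet_Ioi]
    refine lintegral_congr fun u ↦ ?_
    by_cases hu : log r / lam < u
    · rw [if_pos ((hcut u).2 hu), indicator_of_mem (mem_Ioi.2 hu), ENNReal.ofReal_mul (exp_pos _).le]
    · rw [if_neg (mt (hcut u).1 hu), indicator_of_notMem (mt mem_Ioi.1 hu), ENNReal.ofReal_zero]
  rw [hrestrict, lintegral_mul_const' _ _ ENNReal.ofReal_ne_top, lintegral_exp_neg_mul_Ioi _ hc,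
    ← ENNReal.ofReal_mul (by positivity)]
  rcases lt_or_ge r 1 with hr1 | hr1
  · have hlog : log r / lam ⊔ 0 = 0 := max_eq_right (div_nonpos_of_nonpos_of_nonneg
      (log_nonpos hr0.le hr1.le) hlam.le)
    rw [hlog, if_pos hr1, if_neg hr1.not_ge, ENNReal.ofReal_zero, add_zero,
      ← ENNReal.ofReal_mul (by positivity)]
    simp [div_eq_inv_mul]
  · have hlog : log r / lam ⊔ 0 = log r / lam := max_eq_left (div_nonneg (log_nonneg hr1) hlam.le)
    rw [hlog, if_neg hr1.not_gt, if_pos hr1, ENNReal.ofReal_zero, zero_add,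
      ← ENNReal.ofReal_mul (by positivity), rpow_def_of_pos hr0, ← exp_log (pow_pos hr0 2), log_pow,
      div_mul_eq_mul_div, ← exp_add, one_div_mul_eq_div]
    push_cast
    congr 3
    ring

lemma sFinite_of_lintegral_ne_top {α : Type*} [MeasurableSpace α] {μ : Measure α}
    {w : α → ℝ≥0∞} (hw : AEMeasurable w μ) (hw0 : ∀ᵐ x ∂μ, w x ≠ 0) (hint : ∫⁻ x, w x ∂μ ≠ ∞) :
    SFinite μ :=
  have : IsFiniteMeasure (μ.withDensity w) := isFiniteMeasure_withDensity hint
  sFinite_of_absolutelyContinuous (withDensity_absolutelyContinuous' hw hw0)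

section NormedSpace

variable {E : Type*} [NormedAddCommGroup E] [MeasurableSpace E] [OpensMeasurableSpace E]

lemma measurable_ofReal_ite_norm_lt_one_sq :
    Measurable fun z : E ↦ ENNReal.ofReal (if ‖z‖ < 1 then ‖z‖ ^ 2 else 0) :=
  (Measurable.ite (measurableSet_lt measurable_norm measurable_const) (by fun_prop)
    measurable_const).ennreal_ofReal

lemma measurable_ofReal_ite_one_le_norm_rpow (p : ℝ) :
    Measurable fun z : E ↦ ENNReal.ofReal (if 1 ≤ ‖z‖ then ‖z‖ ^ p else 0) :=
  (Measurable.ite (measurableSet_le measurable_const measurable_norm) (by fun_prop)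
    measurable_const).ennreal_ofReal

lemma lintegral_Ioi_lintegral_ite_norm_lt_exp (μ : Measure E) [SFinite μ] {lam c : ℝ}
    (hlam : 0 < lam) (hc : 0 < c) :
    ∫⁻ u in Ioi 0, ∫⁻ z, ENNReal.ofReal
        (if ‖z‖ < exp (lam * u) then exp (-c * u) * ‖z‖ ^ 2 else 0) ∂μ
      = ENNReal.ofReal (1 / c) * ((∫⁻ z, ENNReal.ofReal (if ‖z‖ < 1 then ‖z‖ ^ 2 else 0) ∂μ)
          + ∫⁻ z, ENNReal.ofReal (if 1 ≤ ‖z‖ then ‖z‖ ^ (2 - c / lam) else 0) ∂μ) := by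
  have hmeas : Measurable (Function.uncurry fun (u : ℝ) (z : E) ↦ ENNReal.ofReal
      (if ‖z‖ < exp (lam * u) then exp (-c * u) * ‖z‖ ^ 2 else 0)) :=
    (Measurable.ite (measurableSet_lt (by fun_prop) (by fun_prop)) (by fun_prop)
      measurable_const).ennreal_ofReal
  rw [lintegral_lintegral_swap hmeas.aemeasurable]
  simp_rw [lintegral_Ioi_ite_lt_exp hlam hc (norm_nonneg _)]
  rw [lintegral_const_mul' _ _ ENNReal.ofReal_ne_top,
    lintegral_add_left measurable_ofReal_ite_norm_lt_one_sq]

end NormedSpace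

theorem stmt8_general {d : ℕ} (μ : Measure (EuclideanSpace ℝ (Fin d)))
    (hsupp : μ {z : EuclideanSpace ℝ (Fin d) | ¬ ((∀ i, 0 ≤ z i) ∧ z ≠ 0)} = 0)
    (s lam : ℝ) (hlam : lam ∈ Set.Ioo (s / 2) s)
    (h1 : ∫⁻ z, ENNReal.ofReal (if 1 ≤ ‖z‖ then ‖z‖ ^ (s / lam) else 0) ∂μ < ⊤)
    (h2 : ∫⁻ z, ENNReal.ofReal (if ‖z‖ < 1 then ‖z‖ ^ 2 else 0) ∂μ < ⊤) :
    (∫⁻ u in Set.Ioi (0 : ℝ), ∫⁻ z, ENNReal.ofReal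
        (if ‖z‖ < Real.exp (lam * u) then Real.exp (-(2 * lam - s) * u) * ‖z‖ ^ 2 else 0) ∂μ)
      = ENNReal.ofReal (1 / (2 * lam - s)) *
        ((∫⁻ z, ENNReal.ofReal (if ‖z‖ < 1 then ‖z‖ ^ 2 else 0) ∂μ)
          + ∫⁻ z, ENNReal.ofReal (if 1 ≤ ‖z‖ then ‖z‖ ^ (s / lam) else 0) ∂μ) ∧
    (∫⁻ u in Set.Ioi (0 : ℝ), ∫⁻ z, ENNReal.ofReal
        (if ‖z‖ < Real.exp (lam * u) then Real.exp (-(2 * lam - s) * u) * ‖z‖ ^ 2 else 0) ∂μ)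
      < ⊤ := by
  obtain ⟨hlam_gt, hlam_lt⟩ := hlam
  have hlam0 : 0 < lam := by linarith
  have hexp : 2 - (2 * lam - s) / lam = s / lam := by field_simp; ring
  have hmeas := measurable_ofReal_ite_norm_lt_one_sq.add
    (measurable_ofReal_ite_one_le_norm_rpow (E := EuclideanSpace ℝ (Fin d)) (s / lam))
  have : SFinite μ := by
    refine sFinite_of_lintegral_ne_top hmeas.aemeasurable ?_ ?_
    · filter_upwards [ae_iff.2 hsupp] with z hz
      have hz0 : 0 < ‖z‖ := norm_pos_iff.2 hz.2
      rcases lt_or_ge ‖z‖ 1 with hz1 | hz1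
      · simp [hz1, hz.2]
      · simp [hz1, hz1.not_gt, rpow_pos_of_pos hz0]
    · simp only [Pi.add_apply]
      rw [lintegral_add_left measurable_ofReal_ite_norm_lt_one_sq]
      exact ENNReal.add_ne_top.2 ⟨h2.ne, h1.ne⟩
  have hvalue := lintegral_Ioi_lintegral_ite_norm_lt_exp μ hlam0 (show 0 < 2 * lam - s by linarith)
  rw [hexp] at hvalue
  exact ⟨hvalue, hvalue ▸ ENNReal.mul_lt_top ENNReal.ofReal_lt_top (ENNReal.add_lt_top.2 ⟨h2, h1⟩)⟩

/-- For `λ ∈ (s/2, s)` with `s > 0`, under the moment conditions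
`∫ ‖z‖^{s/λ} 1_{‖z‖≥1} μ(dz) < ∞` and `∫ ‖z‖² 1_{‖z‖<1} μ(dz) < ∞`,
`∫₀^∞ ∫ e^{-(2λ-s)u} ‖z‖² 1_{‖z‖<e^{λu}} μ(dz) du
  = (1/(2λ-s)) [∫ ‖z‖² 1_{‖z‖<1} μ(dz) + ∫ ‖z‖^{s/λ} 1_{‖z‖≥1} μ(dz)] < ∞`. -/
theorem stmt8 {d : ℕ} (μ : Measure (EuclideanSpace ℝ (Fin d)))
    (hsupp : μ {z : EuclideanSpace ℝ (Fin d) | ¬ ((∀ i, 0 ≤ z i) ∧ z ≠ 0)} = 0)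
    (s lam : ℝ) (hs : 0 < s) (hlam : lam ∈ Set.Ioo (s / 2) s)
    (h1 : ∫⁻ z, ENNReal.ofReal (if 1 ≤ ‖z‖ then ‖z‖ ^ (s / lam) else 0) ∂μ < ⊤)
    (h2 : ∫⁻ z, ENNReal.ofReal (if ‖z‖ < 1 then ‖z‖ ^ 2 else 0) ∂μ < ⊤) :
    (∫⁻ u in Set.Ioi (0 : ℝ), ∫⁻ z, ENNReal.ofReal
        (if ‖z‖ < Real.exp (lam * u) then Real.exp (-(2 * lam - s) * u) * ‖z‖ ^ 2 else 0) ∂μ)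
      = ENNReal.ofReal (1 / (2 * lam - s)) *
        ((∫⁻ z, ENNReal.ofReal (if ‖z‖ < 1 then ‖z‖ ^ 2 else 0) ∂μ)
          + ∫⁻ z, ENNReal.ofReal (if 1 ≤ ‖z‖ then ‖z‖ ^ (s / lam) else 0) ∂μ) ∧
    (∫⁻ u in Set.Ioi (0 : ℝ), ∫⁻ z, ENNReal.ofReal
        (if ‖z‖ < Real.exp (lam * u) then Real.exp (-(2 * lam - s) * u) * ‖z‖ ^ 2 else 0) ∂μ)
      < ⊤ :=
  stmt8_general μ hsupp s lam hlam h1 h2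
end

section
/- In the setting of the previous martingale: suppose additionally that s > 0, u ∈ ℝ_{++}^d satisfies uᵀB = s·uᵀ, β ∈ ℝ_+^d, and X_t takes values in ℝ_+^d. Then (e^{−st} ⟨u, X_t⟩)_{t≥0} is a nonnegative submartingale with sup_{t≥0} E(e^{−st}⟨u, X_t⟩) ≤ ‖u‖ E‖X₀‖ + ⟨u, β⟩/s; in particular, for all t ≥ 0, e^{−st}⟨u, X_t⟩ = uᵀ M_t + ⟨u, β⟩ ∫₀^t e^{−sv} dv where M_t := e^{−tB}X_t − ∫₀^t e^{−vB}β dv. -/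
/-!
Because `uᵀ` is a left eigenvector of `B`, `uᵀ e^{wB} = e^{sw} uᵀ`. Pairing the conditional
expectation formula with `u` therefore gives the scalar identity
`E(⟨u, X_t⟩ | F_v) = e^{s(t-v)} ⟨u, X_v⟩ + ⟨u, β⟩ ∫₀^{t-v} e^{sw} dw`.
After multiplying by `e^{-st}`, the drift term is nonnegative, which is the submartingale
property. At `v = 0` its expectation is `⟨u, β⟩ (1 - e^{-st}) / s ≤ ⟨u, β⟩ / s`, and
Cauchy–Schwarz bounds `E⟨u, X₀⟩` by `‖u‖ E‖X₀‖`.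
-/

open MeasureTheory NNReal Matrix

namespace Matrix

variable {n : Type*} [Fintype n] [DecidableEq n]

section Exponential

attribute [local instance] Matrix.linftyOpNormedRing Matrix.linftyOpNormedAlgebra

theorem vecMul_exp_of_vecMul_eq_smul {M : Matrix n n ℝ} {c : ℝ} {u : n → ℝ}
    (h : u ᵥ* M = c • u) : u ᵥ* NormedSpace.exp M = Real.exp c • u := by
  have hpow (k : ℕ) : u ᵥ* M ^ k = c ^ k • u := by
    induction k with
    | zero => simp
    | succ k ih => rw [pow_succ', ← vecMul_vecMul, h, smul_vecMul, ih, smul_smul, pow_succ']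
  let L : Matrix n n ℝ →L[ℝ] (n → ℝ) := LinearMap.toContinuousLinearMap
    { toFun := fun A => u ᵥ* A
      map_add' := fun A B => vecMul_add A B u
      map_smul' := fun r A => vecMul_smul u r A }
  refine ((NormedSpace.exp_series_hasSum_exp' (𝕂 := ℝ) M).mapL L).unique ?_
  rw [Real.exp_eq_exp_ℝ]
  convert (NormedSpace.exp_series_hasSum_exp' (𝕂 := ℝ) c).smul_const u using 2 with k
  simp [L, hpow, smul_smul]

theorem continuous_exp_smul (B : Matrix n n ℝ) :
    Continuous fun w : ℝ => NormedSpace.exp (w • B) :=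
  continuous_iff_continuousAt.2 fun t => (hasDerivAt_exp_smul_const (𝕂 := ℝ) B t).continuousAt

end Exponential

section LeftEigenvector

variable {B : Matrix n n ℝ} {s : ℝ} {u : n → ℝ}

theorem dotProduct_exp_smul_mulVec (hleft : u ᵥ* B = s • u) (w : ℝ) (x : n → ℝ) :
    u ⬝ᵥ NormedSpace.exp (w • B) *ᵥ x = Real.exp (s * w) * (u ⬝ᵥ x) := by
  have h : u ᵥ* (w • B) = (s * w) • u := by rw [vecMul_smul, hleft, smul_smul, mul_comm]
  rw [dotProduct_mulVec, vecMul_exp_of_vecMul_eq_smul h, smul_dotProduct, smul_eq_mul]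

theorem dotProduct_intervalIntegral_exp_smul_mulVec (hleft : u ᵥ* B = s • u) (β : n → ℝ)
    {f : ℝ → ℝ} (hf : Continuous f) (a b : ℝ) :
    u ⬝ᵥ ∫ w in a..b, NormedSpace.exp (f w • B) *ᵥ β
      = (u ⬝ᵥ β) * ∫ w in a..b, Real.exp (s * f w) := by
  let L := LinearMap.toContinuousLinearMap (dotProductBilin ℝ ℝ u)
  have hcont : Continuous fun w => NormedSpace.exp (f w • B) *ᵥ β :=
    (continuous_exp_smul B).comp hf |>.matrix_mulVec continuous_const
  calc u ⬝ᵥ ∫ w in a..b, NormedSpace.exp (f w • B) *ᵥ β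
      = ∫ w in a..b, u ⬝ᵥ NormedSpace.exp (f w • B) *ᵥ β :=
        (L.intervalIntegral_comp_comm (hcont.intervalIntegrable a b)).symm
    _ = ∫ w in a..b, Real.exp (s * f w) * (u ⬝ᵥ β) := by
        simp only [dotProduct_exp_smul_mulVec hleft]
    _ = (u ⬝ᵥ β) * ∫ w in a..b, Real.exp (s * f w) := by
        rw [intervalIntegral.integral_mul_const, mul_comm]

end LeftEigenvector

end Matrix

theorem integral_exp_mul {s : ℝ} (hs : s ≠ 0) (a b : ℝ) :
    ∫ w in a..b, Real.exp (s * w) = (Real.exp (s * b) - Real.exp (s * a)) / s := by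
  rw [intervalIntegral.integral_comp_mul_left Real.exp hs, integral_exp, smul_eq_mul,
    inv_mul_eq_div]

section ExpGrowth

variable {Ω : Type*} {m0 : MeasurableSpace Ω} {P : Measure Ω} {ℱ : Filtration ℝ≥0 m0}
  {Y : ℝ≥0 → Ω → ℝ} {s c : ℝ}

theorem submartingale_exp_neg_mul_of_condExp_eq (hadapted : Adapted ℱ Y)
    (hint : ∀ t, Integrable (Y t) P) (hc : 0 ≤ c)
    (hY : ∀ v t : ℝ≥0, v ≤ t → P[Y t | ℱ v] =ᵐ[P] fun ω =>
      Real.exp (s * (t - v)) * Y v ω + c * ∫ w in (0:ℝ)..(t - v), Real.exp (s * w)) :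
    Submartingale (fun (t : ℝ≥0) ω => Real.exp (-s * t) * Y t ω) ℱ P := by
  refine ⟨fun t => ((hadapted t).const_mul _).stronglyMeasurable, fun v t hvt => ?_,
    fun t => (hint t).const_mul _⟩
  have hI : 0 ≤ c * ∫ w in (0:ℝ)..(t - v), Real.exp (s * w) :=
    mul_nonneg hc (intervalIntegral.integral_nonneg (sub_nonneg.2 (by exact_mod_cast hvt))
      fun w _ => (Real.exp_pos _).le)
  have hexp : Real.exp (-s * t) * Real.exp (s * (t - v)) = Real.exp (-s * v) := by
    rw [← Real.exp_add]; ring_nf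
  filter_upwards [condExp_smul (Real.exp (-s * t)) (Y t) (ℱ v), hY v t hvt] with ω h1 h2
  change _ ≤ P[Real.exp (-s * t) • Y t | ℱ v] ω
  rw [h1, Pi.smul_apply, smul_eq_mul, h2, mul_add, ← mul_assoc, hexp]
  exact le_add_of_nonneg_right (mul_nonneg (Real.exp_pos _).le hI)

theorem integral_exp_neg_mul_le_of_condExp_eq [IsProbabilityMeasure P]
    (hint : Integrable (Y 0) P) (hs : 0 < s) (hc : 0 ≤ c)
    (hY : ∀ v t : ℝ≥0, v ≤ t → P[Y t | ℱ v] =ᵐ[P] fun ω =>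
      Real.exp (s * (t - v)) * Y v ω + c * ∫ w in (0:ℝ)..(t - v), Real.exp (s * w))
    (t : ℝ≥0) :
    ∫ ω, Real.exp (-s * t) * Y t ω ∂P ≤ ∫ ω, Y 0 ω ∂P + c / s := by
  have hmean : ∫ ω, Y t ω ∂P
      = Real.exp (s * t) * ∫ ω, Y 0 ω ∂P + c * ((Real.exp (s * t) - 1) / s) := by
    rw [← integral_condExp (ℱ.le 0), integral_congr_ae (hY 0 t bot_le),
      integral_add (hint.const_mul _) (integrable_const _), integral_const_mul]
    simp [integral_exp_mul hs.ne']
  have hexp : Real.exp (-s * t) * Real.exp (s * t) = 1 := by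
    rw [← Real.exp_add]; simp
  calc ∫ ω, Real.exp (-s * t) * Y t ω ∂P
      = ∫ ω, Y 0 ω ∂P + c / s - Real.exp (-s * t) * (c / s) := by
        rw [integral_const_mul, hmean]; linear_combination (∫ ω, Y 0 ω ∂P + c / s) * hexp
    _ ≤ ∫ ω, Y 0 ω ∂P + c / s :=
        sub_le_self _ (mul_nonneg (Real.exp_pos _).le (div_nonneg hc hs.le))

end ExpGrowth

section LinearFunctional

variable {Ω : Type*} {m0 : MeasurableSpace Ω} {P : Measure Ω} {n : Type*} [Fintype n]

theorem integral_dotProduct_le {f : Ω → n → ℝ} (hf : Integrable f P) (u : n → ℝ) :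
    ∫ ω, u ⬝ᵥ f ω ∂P ≤ √(∑ i, u i ^ 2) * ∫ ω, √(∑ i, f ω i ^ 2) ∂P := by
  have hnorm (x : n → ℝ) : √(∑ i, x i ^ 2) = ‖WithLp.toLp 2 x‖ := by
    simp [EuclideanSpace.norm_eq]
  have hf' : Integrable (fun ω => √(∑ i, f ω i ^ 2)) P := by
    simp_rw [hnorm]
    exact ((EuclideanSpace.equiv n ℝ).symm.toContinuousLinearMap.integrable_comp hf).norm
  rw [← integral_const_mul]
  exact integral_mono
    ((LinearMap.toContinuousLinearMap (dotProductBilin ℝ ℝ u)).integrable_comp hf)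
    (hf'.const_mul _) fun ω => Real.sum_mul_le_sqrt_mul_sqrt _ u (f ω)

variable [DecidableEq n] {ℱ : Filtration ℝ≥0 m0} {B : Matrix n n ℝ} {β : n → ℝ}
  {X : ℝ≥0 → Ω → n → ℝ} {s : ℝ} {u : n → ℝ}

theorem condExp_dotProduct_of_condExp_eq (hint : ∀ t, Integrable (X t) P)
    (hcond : ∀ v t : ℝ≥0, v ≤ t → P[X t | ℱ v] =ᵐ[P] fun ω =>
      NormedSpace.exp (((t : ℝ) - v) • B) *ᵥ X v ω
        + ∫ w in (0:ℝ)..((t : ℝ) - v), NormedSpace.exp (w • B) *ᵥ β)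
    (hleft : u ᵥ* B = s • u) (v t : ℝ≥0) (hvt : v ≤ t) :
    P[fun ω => u ⬝ᵥ X t ω | ℱ v] =ᵐ[P] fun ω =>
      Real.exp (s * (t - v)) * (u ⬝ᵥ X v ω)
        + (u ⬝ᵥ β) * ∫ w in (0:ℝ)..(t - v), Real.exp (s * w) := by
  refine ((LinearMap.toContinuousLinearMap (dotProductBilin ℝ ℝ u)).comp_condExp_comm
    (hint t)).symm.trans ?_
  filter_upwards [hcond v t hvt] with ω hω
  change u ⬝ᵥ P[X t | ℱ v] ω = _
  rw [hω, dotProduct_add, dotProduct_exp_smul_mulVec hleft,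
    dotProduct_intervalIntegral_exp_smul_mulVec hleft β (f := fun w => w) continuous_id]

theorem exp_neg_mul_dotProduct_eq (hleft : u ᵥ* B = s • u) (t : ℝ) (x : n → ℝ) :
    Real.exp (-s * t) * (u ⬝ᵥ x)
      = u ⬝ᵥ (NormedSpace.exp ((-t) • B) *ᵥ x
          - ∫ v in (0:ℝ)..t, NormedSpace.exp ((-v) • B) *ᵥ β)
        + (u ⬝ᵥ β) * ∫ v in (0:ℝ)..t, Real.exp (-s * v) := by
  rw [dotProduct_sub, dotProduct_exp_smul_mulVec hleft,
    dotProduct_intervalIntegral_exp_smul_mulVec hleft β continuous_neg]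
  simp only [mul_neg, neg_mul, sub_add_cancel]

end LinearFunctional

/-- In the setting of the martingale `M_t = e^{-tB}X_t - ∫₀^t e^{-vB}β dv`: if moreover `s > 0`,
`u` is a strictly positive left eigenvector of `B` with eigenvalue `s`, `β ≥ 0` and `X_t ≥ 0`,
then `(e^{-st}⟨u, X_t⟩)_t` is a nonnegative submartingale whose expectations are bounded by
`‖u‖E‖X₀‖ + ⟨u,β⟩/s` (Euclidean norms), and
`e^{-st}⟨u, X_t⟩ = uᵀM_t + ⟨u,β⟩∫₀^t e^{-sv} dv` pointwise. -/
theorem stmt11 {d : ℕ} {Ω : Type*} {m0 : MeasurableSpace Ω}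
    (P : Measure Ω) [IsProbabilityMeasure P] (ℱ : Filtration ℝ≥0 m0)
    (B : Matrix (Fin d) (Fin d) ℝ) (β : Fin d → ℝ)
    (X : ℝ≥0 → Ω → (Fin d → ℝ))
    (hadapted : Adapted ℱ X)
    (hint : ∀ t, Integrable (X t) P)
    (hcond : ∀ v t : ℝ≥0, v ≤ t →
      P[X t | ℱ v] =ᵐ[P] fun ω =>
        (NormedSpace.exp ((((t : ℝ) - (v : ℝ))) • B)).mulVec (X v ω)
          + ∫ w in (0:ℝ)..((t : ℝ) - (v : ℝ)), (NormedSpace.exp (w • B)).mulVec β)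
    (s : ℝ) (hs : 0 < s) (u : Fin d → ℝ) (hu : ∀ i, 0 < u i)
    (hleft : Matrix.vecMul u B = s • u)
    (hβ : ∀ i, 0 ≤ β i) (hX : ∀ t ω i, 0 ≤ X t ω i) :
    Submartingale (fun (t : ℝ≥0) (ω : Ω) => Real.exp (-s * (t : ℝ)) * (u ⬝ᵥ X t ω)) ℱ P ∧
    (∀ (t : ℝ≥0) (ω : Ω), 0 ≤ Real.exp (-s * (t : ℝ)) * (u ⬝ᵥ X t ω)) ∧
    (∀ t : ℝ≥0, ∫ ω, Real.exp (-s * (t : ℝ)) * (u ⬝ᵥ X t ω) ∂P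
      ≤ Real.sqrt (∑ i, (u i) ^ 2) * (∫ ω, Real.sqrt (∑ i, (X 0 ω i) ^ 2) ∂P)
        + (u ⬝ᵥ β) / s) ∧
    (∀ t : ℝ≥0, ∀ ω, Real.exp (-s * (t : ℝ)) * (u ⬝ᵥ X t ω)
      = u ⬝ᵥ ((NormedSpace.exp ((-(t : ℝ)) • B)).mulVec (X t ω)
            - ∫ v in (0:ℝ)..(t : ℝ), (NormedSpace.exp ((-v) • B)).mulVec β)
        + (u ⬝ᵥ β) * ∫ v in (0:ℝ)..(t : ℝ), Real.exp (-s * v)) := by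
  have hc : 0 ≤ u ⬝ᵥ β := dotProduct_nonneg_of_nonneg (fun i => (hu i).le) hβ
  have hY := condExp_dotProduct_of_condExp_eq hint hcond hleft
  have hYadapted : Adapted ℱ fun t ω => u ⬝ᵥ X t ω := fun t =>
    (continuous_const.dotProduct continuous_id).measurable.comp (hadapted t)
  have hYint (t : ℝ≥0) : Integrable (fun ω => u ⬝ᵥ X t ω) P :=
    (LinearMap.toContinuousLinearMap (dotProductBilin ℝ ℝ u)).integrable_comp (hint t)
  refine ⟨submartingale_exp_neg_mul_of_condExp_eq hYadapted hYint hc hY, fun t ω => ?_,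
    fun t => ?_, fun t ω => exp_neg_mul_dotProduct_eq hleft t (X t ω)⟩
  · exact mul_nonneg (Real.exp_pos _).le
      (dotProduct_nonneg_of_nonneg (fun i => (hu i).le) (hX t ω))
  · exact (integral_exp_neg_mul_le_of_condExp_eq (hYint 0) hs hc hY t).trans
      (add_le_add_left (integral_dotProduct_le (hint 0) u) _)
end

section
/- Assume ‖e^{−st}e^{tB} − ũuᵀ‖ ≤ C₁ e^{−C₂t} for all t ≥ 0 with s, C₁, C₂ > 0. Then e^{−st} ∫₀^t (t − w) e^{wB} dw → ũuᵀ / s² as t → ∞ (in matrix norm). -/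
open scoped Matrix.Norms.L2Operator
open Filter Matrix

/-!
Write `e^{wB} = e^{sw} (ũuᵀ + F w)` with `‖F w‖ ≤ C₁ e^{-C₂ w}`. The main part contributes
`(e^{-st} ∫₀^t (t - w) e^{sw} dw) ũuᵀ`, whose scalar factor equals `1/s² - (t/s + 1/s²) e^{-st}`
by an explicit antiderivative; the remainder has norm at most `C₁ t² e^{-min(s, C₂) t}`.
-/

open Real Topology intervalIntegral

lemma integral_sub_mul_exp_mul {s : ℝ} (hs : s ≠ 0) (t : ℝ) :
    ∫ w in (0:ℝ)..t, (t - w) * exp (s * w) = exp (s * t) / s ^ 2 - t / s - 1 / s ^ 2 := by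
  have hderiv : ∀ w ∈ Set.uIcc (0:ℝ) t,
      HasDerivAt (fun w => exp (s * w) * ((t - w) / s + 1 / s ^ 2))
        ((t - w) * exp (s * w)) w := by
    intro w _
    have hexp : HasDerivAt (fun w => exp (s * w)) (exp (s * w) * s) w := by
      simpa using ((hasDerivAt_id w).const_mul s).exp
    have hlin : HasDerivAt (fun w => (t - w) / s + 1 / s ^ 2) (-1 / s) w := by
      simpa using (((hasDerivAt_id w).const_sub t).div_const s).add_const (1 / s ^ 2)
    refine (hexp.mul hlin).congr_deriv ?_
    field_simp
    ring
  rw [integral_eq_sub_of_hasDerivAt hderiv ((by fun_prop : Continuous _).intervalIntegrable _ _)]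
  field_simp
  simp only [mul_zero, exp_zero]
  ring

lemma exp_neg_mul_mul_integral_sub_mul_exp_mul {s : ℝ} (hs : s ≠ 0) (t : ℝ) :
    exp (-s * t) * ∫ w in (0:ℝ)..t, (t - w) * exp (s * w)
      = 1 / s ^ 2 - (t / s + 1 / s ^ 2) * exp (-s * t) := by
  have hinv : exp (-s * t) * exp (s * t) = 1 := by rw [← exp_add]; simp
  rw [integral_sub_mul_exp_mul hs]
  linear_combination hinv / s ^ 2

lemma tendsto_exp_neg_mul_mul_integral_sub_mul_exp_mul {s : ℝ} (hs : 0 < s) :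
    Tendsto (fun t => exp (-s * t) * ∫ w in (0:ℝ)..t, (t - w) * exp (s * w))
      atTop (𝓝 (1 / s ^ 2)) := by
  simp only [exp_neg_mul_mul_integral_sub_mul_exp_mul hs.ne']
  have hexp : Tendsto (fun t => exp (-s * t)) atTop (𝓝 0) := by
    simpa using tendsto_rpow_mul_exp_neg_mul_atTop_nhds_zero 0 s hs
  have hmul : Tendsto (fun t => t * exp (-s * t)) atTop (𝓝 0) := by
    refine (tendsto_rpow_mul_exp_neg_mul_atTop_nhds_zero 1 s hs).congr' ?_
    filter_upwards [eventually_gt_atTop 0] with t ht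
    rw [rpow_one]
  have hrem : Tendsto (fun t => (t / s + 1 / s ^ 2) * exp (-s * t)) atTop (𝓝 0) := by
    simpa [add_mul, div_eq_inv_mul, mul_assoc] using
      (hmul.const_mul s⁻¹).add (hexp.const_mul (s ^ 2)⁻¹)
  simpa using tendsto_const_nhds.sub hrem

lemma tendsto_exp_neg_mul_smul_integral_of_norm_le {E : Type*} [NormedAddCommGroup E]
    [NormedSpace ℝ E] {F : ℝ → E} {s c C : ℝ} (hs : 0 < s) (hc : 0 < c)
    (hF : ∀ w, 0 ≤ w → ‖F w‖ ≤ C * exp (-c * w)) :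
    Tendsto (fun t => exp (-s * t) • ∫ w in (0:ℝ)..t, ((t - w) * exp (s * w)) • F w)
      atTop (𝓝 0) := by
  set m := min s c
  have hm : 0 < m := lt_min hs hc
  have hC : 0 ≤ C := by simpa using (norm_nonneg _).trans (hF 0 le_rfl)
  have hintegrand : ∀ t w, 0 ≤ w → w ≤ t →
      ‖(exp (-s * t) * ((t - w) * exp (s * w))) • F w‖ ≤ C * t * exp (-m * t) := by
    intro t w hw hwt
    have hexp : exp (-s * t) * exp (s * w) * exp (-c * w) ≤ exp (-m * t) := by
      rw [← exp_add, ← exp_add, exp_le_exp]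
      nlinarith [min_le_left s c, min_le_right s c]
    rw [norm_smul, norm_of_nonneg (by positivity)]
    calc exp (-s * t) * ((t - w) * exp (s * w)) * ‖F w‖
        ≤ exp (-s * t) * ((t - w) * exp (s * w)) * (C * exp (-c * w)) := by
          gcongr
          exact hF w hw
      _ = (t - w) * C * (exp (-s * t) * exp (s * w) * exp (-c * w)) := by ring
      _ ≤ t * C * exp (-m * t) := by gcongr <;> nlinarith
      _ = C * t * exp (-m * t) := by ring
  have hbound : ∀ᶠ t in atTop,
      ‖exp (-s * t) • ∫ w in (0:ℝ)..t, ((t - w) * exp (s * w)) • F w‖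
        ≤ C * (t ^ 2 * exp (-m * t)) := by
    filter_upwards [eventually_ge_atTop 0] with t ht
    rw [← integral_smul]
    simp_rw [smul_smul]
    refine (norm_integral_le_of_norm_le_const (C := C * t * exp (-m * t))
      fun w hw => ?_).trans_eq ?_
    · rw [Set.uIoc_of_le ht] at hw
      exact hintegrand t w hw.1.le hw.2
    · rw [sub_zero, abs_of_nonneg ht]
      ring
  have hlim : Tendsto (fun t => t ^ 2 * exp (-m * t)) atTop (𝓝 0) := by
    simpa using tendsto_rpow_mul_exp_neg_mul_atTop_nhds_zero 2 m hm
  simpa using squeeze_zero_norm' hbound (by simpa using hlim.const_mul C)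

lemma tendsto_exp_neg_mul_smul_integral_sub_smul {E : Type*} [NormedAddCommGroup E]
    [NormedSpace ℝ E] [CompleteSpace E] {f : ℝ → E} (hf : Continuous f) {A : E} {s c C : ℝ}
    (hs : 0 < s) (hc : 0 < c) (hbound : ∀ t, 0 ≤ t → ‖exp (-s * t) • f t - A‖ ≤ C * exp (-c * t)) :
    Tendsto (fun t => exp (-s * t) • ∫ w in (0:ℝ)..t, (t - w) • f w)
      atTop (𝓝 ((1 / s ^ 2) • A)) := by
  set F := fun w => exp (-s * w) • f w - A
  have hsplit : ∀ t, ∫ w in (0:ℝ)..t, (t - w) • f w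
      = (∫ w in (0:ℝ)..t, (t - w) * exp (s * w)) • A
        + ∫ w in (0:ℝ)..t, ((t - w) * exp (s * w)) • F w := by
    intro t
    rw [← intervalIntegral.integral_smul_const, ← integral_add
      ((by fun_prop : Continuous _).intervalIntegrable _ _)
      ((by fun_prop : Continuous _).intervalIntegrable _ _)]
    refine integral_congr fun w _ => ?_
    have hinv : exp (s * w) * exp (-s * w) = 1 := by rw [← exp_add]; simp
    simp only [F, smul_sub, smul_smul, mul_assoc, hinv, mul_one]
    abel
  have hlim := ((tendsto_exp_neg_mul_mul_integral_sub_mul_exp_mul hs).smul_const A).add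
    (tendsto_exp_neg_mul_smul_integral_of_norm_le hs hc hbound)
  rw [add_zero] at hlim
  refine hlim.congr fun t => ?_
  rw [hsplit, smul_add, smul_smul]

theorem stmt14_general {d : ℕ} (B : Matrix (Fin d) (Fin d) ℝ)
    (s C₁ C₂ : ℝ) (hs : 0 < s) (hC₂ : 0 < C₂)
    (u utilde : Fin d → ℝ)
    (hbound : ∀ t : ℝ, 0 ≤ t →
      ‖Real.exp (-s * t) • NormedSpace.exp (t • B) - Matrix.vecMulVec utilde u‖
        ≤ C₁ * Real.exp (-C₂ * t)) :
    Tendsto (fun t : ℝ =>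
        Real.exp (-s * t) • ∫ w in (0:ℝ)..t, (t - w) • NormedSpace.exp (w • B))
      atTop (nhds ((1 / s ^ 2) • Matrix.vecMulVec utilde u)) :=
  have hexp : Continuous fun t : ℝ => NormedSpace.exp (t • B) :=
    continuous_iff_continuousAt.2 fun t => (hasDerivAt_exp_smul_const B t).continuousAt
  tendsto_exp_neg_mul_smul_integral_sub_smul hexp hs hC₂ hbound

/-- If `‖e^{-st}e^{tB} - ũuᵀ‖ ≤ C₁e^{-C₂t}` for all `t ≥ 0` with `s, C₁, C₂ > 0`, then
`e^{-st} ∫₀^t (t-w) e^{wB} dw → ũuᵀ/s²` as `t → ∞` (in matrix norm). -/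
theorem stmt14 {d : ℕ} (B : Matrix (Fin d) (Fin d) ℝ)
    (s C₁ C₂ : ℝ) (hs : 0 < s) (hC₁ : 0 < C₁) (hC₂ : 0 < C₂)
    (u utilde : Fin d → ℝ)
    (hbound : ∀ t : ℝ, 0 ≤ t →
      ‖Real.exp (-s * t) • NormedSpace.exp (t • B) - Matrix.vecMulVec utilde u‖
        ≤ C₁ * Real.exp (-C₂ * t)) :
    Tendsto (fun t : ℝ =>
        Real.exp (-s * t) • ∫ w in (0:ℝ)..t, (t - w) • NormedSpace.exp (w • B))
      atTop (nhds ((1 / s ^ 2) • Matrix.vecMulVec utilde u)) :=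
  stmt14_general B s C₁ C₂ hs hC₂ u utilde hbound
end

section
/- Let s > 0, a ∈ ℝ with a < s/2 and a ≠ 0, and assume ‖e^{−st}e^{tB} − ũuᵀ‖ ≤ C₁e^{−C₂t} for all t ≥ 0 with C₁, C₂ > 0. Then e^{−st} ∫₀^t e^{2a(t−u)} (∫₀^u e^{wB} dw) du → ũuᵀ / ((s − 2a) s) as t → ∞. -/
/-!
Put `k = s - 2a`. Since `e^{-st} e^{2a(t-v)} = e^{-kt} e^{kv} e^{-sv}`, the quantity in question is
the exponential average `e^{-kt} ∫₀^t e^{kv} F(v) dv` of `F(v) = e^{-sv} ∫₀^v e^{wB} dw`, and `F`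
is itself the exponential average with rate `s` of `e^{-sw} e^{wB}`, which tends to `ũuᵀ` by the
decay hypothesis. An exponential average with rate `k > 0` of a function tending to `L` tends to
`L / k`; applied twice this gives the limit `ũuᵀ / ((s - 2a) s)`.
-/

open scoped Matrix.Norms.L2Operator
open Filter Matrix Real Topology

theorem integral_exp_mul_s18 {k : ℝ} (hk : k ≠ 0) (a b : ℝ) :
    ∫ x in a..b, exp (k * x) = (exp (k * b) - exp (k * a)) / k := by
  rw [intervalIntegral.integral_comp_mul_left (fun x => exp x) hk, integral_exp, smul_eq_mul,
    inv_mul_eq_div]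

theorem exp_neg_mul_mul_integral_exp_mul {k : ℝ} (hk : k ≠ 0) (t : ℝ) :
    exp (-k * t) * ∫ v in (0:ℝ)..t, exp (k * v) = (1 - exp (-k * t)) / k := by
  rw [integral_exp_mul_s18 hk, mul_zero, exp_zero, mul_div_assoc', mul_sub, neg_mul, ← exp_add,
    neg_add_cancel, exp_zero, mul_one]

section ExponentialAverage

variable {E : Type*} [NormedAddCommGroup E] [NormedSpace ℝ E]

theorem tendsto_exp_neg_mul_smul_integral_exp_mul_smul_of_tendsto_zero {k : ℝ} (hk : 0 < k)
    {h : ℝ → E} (hc : Continuous h) (hh : Tendsto h atTop (𝓝 0)) :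
    Tendsto (fun t => exp (-k * t) • ∫ v in (0:ℝ)..t, exp (k * v) • h v) atTop (𝓝 0) := by
  rw [Metric.tendsto_nhds]
  intro ε hε
  obtain ⟨T, hT⟩ : ∃ T, ∀ v ≥ T, ‖h v‖ ≤ k * ε / 2 :=
    eventually_atTop.1 ((tendsto_norm_zero.comp hh).eventually
      (eventually_le_nhds (by positivity)))
  have hint : ∀ a b, IntervalIntegrable (fun v => exp (k * v) • h v) MeasureTheory.volume a b :=
    fun a b => (by fun_prop : Continuous _).intervalIntegrable a b
  set A := ‖∫ v in (0:ℝ)..T, exp (k * v) • h v‖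
  have hhead : Tendsto (fun t => A * exp (-k * t)) atTop (𝓝 0) := by
    simpa using (tendsto_exp_atBot.comp
      (tendsto_id.const_mul_atTop_of_neg (neg_neg_of_pos hk))).const_mul A
  have htail : ∀ t ≥ T, ‖∫ v in T..t, exp (k * v) • h v‖ ≤ ε / 2 * exp (k * t) := by
    intro t ht
    calc ‖∫ v in T..t, exp (k * v) • h v‖ ≤ ∫ v in T..t, k * ε / 2 * exp (k * v) := by
          refine intervalIntegral.norm_integral_le_of_norm_le ht (.of_forall fun v hv => ?_)
            ((by fun_prop : Continuous _).intervalIntegrable T t)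
          rw [norm_smul, norm_of_nonneg (exp_pos _).le, mul_comm]
          gcongr
          exact hT v hv.1.le
      _ = ε / 2 * (exp (k * t) - exp (k * T)) := by
          rw [intervalIntegral.integral_const_mul, integral_exp_mul_s18 hk.ne']
          field_simp
      _ ≤ ε / 2 * exp (k * t) := by gcongr; linarith [exp_pos (k * T)]
  filter_upwards [eventually_ge_atTop T, hhead.eventually (eventually_lt_nhds (half_pos hε))]
    with t ht hAt
  rw [dist_zero_right, ← intervalIntegral.integral_add_adjacent_intervals (hint 0 T) (hint T t),
    norm_smul, norm_of_nonneg (exp_pos _).le]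
  calc exp (-k * t) * ‖(∫ v in (0:ℝ)..T, exp (k * v) • h v) + ∫ v in T..t, exp (k * v) • h v‖
      ≤ exp (-k * t) * (A + ε / 2 * exp (k * t)) := by
        gcongr
        linarith [norm_add_le (∫ v in (0:ℝ)..T, exp (k * v) • h v)
          (∫ v in T..t, exp (k * v) • h v), htail t ht]
    _ = A * exp (-k * t) + ε / 2 := by
        rw [mul_add, mul_left_comm, ← exp_add, neg_mul, neg_add_cancel, exp_zero]
        ring
    _ < ε := by linarith

theorem tendsto_exp_neg_mul_smul_integral_exp_mul_smul [CompleteSpace E] {k : ℝ} (hk : 0 < k)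
    {g : ℝ → E} (hc : Continuous g) {L : E} (hg : Tendsto g atTop (𝓝 L)) :
    Tendsto (fun t => exp (-k * t) • ∫ v in (0:ℝ)..t, exp (k * v) • g v) atTop
      (𝓝 (k⁻¹ • L)) := by
  have hsplit : ∀ t, exp (-k * t) • ∫ v in (0:ℝ)..t, exp (k * v) • g v =
      exp (-k * t) • (∫ v in (0:ℝ)..t, exp (k * v) • (g v - L)) +
        ((1 - exp (-k * t)) / k) • L := by
    intro t
    rw [← exp_neg_mul_mul_integral_exp_mul hk.ne', mul_smul, ← smul_add,
      ← intervalIntegral.integral_smul_const, ← intervalIntegral.integral_add]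
    · simp only [← smul_add, sub_add_cancel]
    all_goals exact (by fun_prop : Continuous _).intervalIntegrable 0 t
  have hscalar : Tendsto (fun t => (1 - exp (-k * t)) / k) atTop (𝓝 k⁻¹) := by
    have := tendsto_exp_atBot.comp (tendsto_id.const_mul_atTop_of_neg (neg_neg_of_pos hk))
    simpa using (this.const_sub 1).div_const k
  have hrem := tendsto_exp_neg_mul_smul_integral_exp_mul_smul_of_tendsto_zero hk
    (hc.sub continuous_const) (tendsto_sub_nhds_zero_iff.2 hg)
  simpa using (hrem.add (hscalar.smul_const L)).congr fun t => (hsplit t).symm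

end ExponentialAverage

theorem stmt18_general {d : ℕ} (B : Matrix (Fin d) (Fin d) ℝ)
    (s C₁ C₂ a : ℝ) (hs : 0 < s) (hC₂ : 0 < C₂)
    (ha' : 2 * a < s)
    (u utilde : Fin d → ℝ)
    (hbound : ∀ t : ℝ, 0 ≤ t →
      ‖Real.exp (-s * t) • NormedSpace.exp (t • B) - Matrix.vecMulVec utilde u‖
        ≤ C₁ * Real.exp (-C₂ * t)) :
    Tendsto (fun t : ℝ =>
        Real.exp (-s * t) •
          ∫ v in (0:ℝ)..t, Real.exp (2 * a * (t - v)) •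
            ∫ w in (0:ℝ)..v, NormedSpace.exp (w • B))
      atTop (nhds ((1 / ((s - 2 * a) * s)) • Matrix.vecMulVec utilde u)) := by
  have hexp : Continuous fun w : ℝ => NormedSpace.exp (w • B) :=
    continuous_iff_continuousAt.2 fun w => (hasDerivAt_exp_smul_const B w).continuousAt
  have hlim : Tendsto (fun w => exp (-s * w) • NormedSpace.exp (w • B)) atTop
      (𝓝 (vecMulVec utilde u)) := by
    have hdecay : Tendsto (fun t => C₁ * exp (-C₂ * t)) atTop (𝓝 0) := by
      simpa using (tendsto_exp_atBot.comp
        (tendsto_id.const_mul_atTop_of_neg (neg_neg_of_pos hC₂))).const_mul C₁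
    exact tendsto_iff_norm_sub_tendsto_zero.2 (squeeze_zero' (.of_forall fun _ => norm_nonneg _)
      ((eventually_ge_atTop 0).mono hbound) hdecay)
  set F := fun v => exp (-s * v) • ∫ w in (0:ℝ)..v, NormedSpace.exp (w • B)
  have hF : Tendsto F atTop (𝓝 (s⁻¹ • vecMulVec utilde u)) := by
    refine (tendsto_exp_neg_mul_smul_integral_exp_mul_smul hs (by fun_prop) hlim).congr
      fun v => ?_
    simp only [F, smul_smul, ← exp_add, ← add_mul, add_neg_cancel, zero_mul, exp_zero, one_smul]
  have hFc : Continuous F := (by fun_prop : Continuous fun v => exp (-s * v)).smul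
    (intervalIntegral.continuous_primitive (fun a b => hexp.intervalIntegrable a b) 0)
  have hkernel : ∀ t, exp (-(s - 2 * a) * t) • ∫ v in (0:ℝ)..t, exp ((s - 2 * a) * v) • F v =
      exp (-s * t) • ∫ v in (0:ℝ)..t, exp (2 * a * (t - v)) •
        ∫ w in (0:ℝ)..v, NormedSpace.exp (w • B) := by
    intro t
    have hexp_split : ∀ v,
        exp (2 * a * (t - v)) = exp (2 * a * t) * exp ((s - 2 * a) * v + -s * v) :=
      fun v => by rw [← exp_add]; ring_nf
    simp only [F, smul_smul, ← exp_add]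
    simp_rw [hexp_split, mul_smul, intervalIntegral.integral_smul, smul_smul, ← exp_add]
    congr 2
    ring
  rw [one_div, mul_inv, ← smul_smul]
  exact (tendsto_exp_neg_mul_smul_integral_exp_mul_smul (sub_pos.2 ha') hFc hF).congr hkernel

/-- If `s > 0`, `a ≠ 0`, `2a < s` and `‖e^{-st}e^{tB} - ũuᵀ‖ ≤ C₁e^{-C₂t}` for all `t ≥ 0`, then
`e^{-st} ∫₀^t e^{2a(t-u)} (∫₀^u e^{wB} dw) du → ũuᵀ/((s-2a)s)` as `t → ∞`. -/
theorem stmt18 {d : ℕ} (B : Matrix (Fin d) (Fin d) ℝ)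
    (s C₁ C₂ a : ℝ) (hs : 0 < s) (hC₁ : 0 < C₁) (hC₂ : 0 < C₂)
    (ha : a ≠ 0) (ha' : 2 * a < s)
    (u utilde : Fin d → ℝ)
    (hbound : ∀ t : ℝ, 0 ≤ t →
      ‖Real.exp (-s * t) • NormedSpace.exp (t • B) - Matrix.vecMulVec utilde u‖
        ≤ C₁ * Real.exp (-C₂ * t)) :
    Tendsto (fun t : ℝ =>
        Real.exp (-s * t) •
          ∫ v in (0:ℝ)..t, Real.exp (2 * a * (t - v)) •
            ∫ w in (0:ℝ)..v, NormedSpace.exp (w • B))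
      atTop (nhds ((1 / ((s - 2 * a) * s)) • Matrix.vecMulVec utilde u)) :=
  stmt18_general B s C₁ C₂ a hs hC₂ ha' u utilde hbound
end
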